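/- arXiv:1510.00515 — 3 statements merged into one kernel-verified Lean document; each statement's English description precedes it below -/
import Mathlib

section
/- Let M be a nonempty compact metric space and let φ be a flow on M without rest points. Then there exists τ > 0 such that φ(T, x) ≠ x for every x ∈ M and every real T with 0 < T < τ; in other words, the periods of all periodic points of φ are bounded below by τ. (Single-flow case of Lemma 5.9.) -/
lemma aux_rest {M : Type*} (φ : ℝ → M → M)
    (h0 : ∀ x : M, φ 0 x = x)
    (hadd : ∀ (s t : ℝ) (x : M), φ (s + t) x = φ s (φ t x))
    (x : M) (h : ∀ t ∈ Set.Icc (0:ℝ) 1, φ t x = x) : ∀ t : ℝ, φ t x = x := by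
  have hn : ∀ n : ℕ, ∀ t : ℝ, t ∈ Set.Icc 0 (n:ℝ) → φ t x = x := by
    intro n
    induction n with
    | zero =>
      intro t ht
      have : t = 0 := le_antisymm (by exact_mod_cast ht.2) ht.1
      simp [this, h0]
    | succ n ih =>
      intro t ht
      by_cases hle : t ≤ n
      · exact ih t ⟨ht.1, hle⟩
      · push_neg at hle
        have heq : (t - (n:ℝ)) + n = t := by ring
        have h2 : φ (n:ℝ) x = x := ih n ⟨by positivity, le_refl _⟩
        have h3 : t - (n:ℝ) ∈ Set.Icc (0:ℝ) 1 := by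
          constructor
          · linarith
          · have := ht.2; push_cast at this; linarith
        calc φ t x = φ ((t - n) + n) x := by rw [heq]
          _ = φ (t - n) (φ n x) := hadd _ _ _
          _ = φ (t - n) x := by rw [h2]
          _ = x := h _ h3
  have hpos : ∀ t : ℝ, 0 ≤ t → φ t x = x := fun t ht =>
    hn ⌈t⌉₊ t ⟨ht, Nat.le_ceil t⟩
  intro t
  rcases le_or_gt 0 t with ht | ht
  · exact hpos t ht
  · have hneg := hpos (-t) (by linarith)
    calc φ t x = φ t (φ (-t) x) := by rw [hneg]
      _ = φ (t + -t) x := (hadd _ _ _).symm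
      _ = x := by simp [h0]

/-- Single-flow case of Lemma 5.9: on a nonempty compact metric space, a flow without
rest points has its periodic points' periods uniformly bounded below. -/
theorem flow_without_rest_points_period_bounded_below
    {M : Type*} [MetricSpace M] [CompactSpace M] [Nonempty M]
    (φ : ℝ → M → M)
    (hcont : Continuous fun p : ℝ × M => φ p.1 p.2)
    (h0 : ∀ x : M, φ 0 x = x)
    (hadd : ∀ (s t : ℝ) (x : M), φ (s + t) x = φ s (φ t x))
    (hnorest : ∀ x : M, ∃ t : ℝ, φ t x ≠ x) :
    ∃ τ : ℝ, 0 < τ ∧ ∀ (x : M) (T : ℝ), 0 < T → T < τ → φ T x ≠ x := by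
  -- step 1: every point moves at some time in [0,1]
  have hmove : ∀ x : M, ∃ t ∈ Set.Icc (0:ℝ) 1, φ t x ≠ x := by
    intro x
    by_contra hc
    push_neg at hc
    obtain ⟨t, ht⟩ := hnorest x
    exact ht (aux_rest φ h0 hadd x hc t)
  -- choose for each x a time and a displacement
  choose tt htt hne using hmove
  set d : M → ℝ := fun x => dist (φ (tt x) x) x with hd
  have hdpos : ∀ x, 0 < d x := fun x => dist_pos.2 (hne x)
  -- open cover
  have hcov : Set.univ ⊆ ⋃ x : M, {y : M | d x / 2 < dist (φ (tt x) y) y} := by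
    intro y _
    exact Set.mem_iUnion.2 ⟨y, by simpa [hd] using half_lt_self (hdpos y)⟩
  have hopen : ∀ x : M, IsOpen {y : M | d x / 2 < dist (φ (tt x) y) y} := by
    intro x
    have : Continuous fun y : M => dist (φ (tt x) y) y := by
      apply Continuous.dist _ continuous_id
      exact hcont.comp (continuous_const.prodMk continuous_id)
    exact isOpen_lt continuous_const this
  obtain ⟨s, hs⟩ := isCompact_univ.elim_finite_subcover _ hopen hcov
  have hsne : s.Nonempty := by
    obtain ⟨y⟩ := ‹Nonempty M›
    obtain ⟨x, hx, _⟩ := Set.mem_iUnion₂.1 (hs (Set.mem_univ y))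
    exact ⟨x, hx⟩
  set δ : ℝ := s.inf' hsne (fun x => d x / 2) with hδ
  have hδpos : 0 < δ := by
    rw [hδ, Finset.lt_inf'_iff]
    exact fun x _ => half_pos (hdpos x)
  have hδmove : ∀ y : M, ∃ t ∈ Set.Icc (0:ℝ) 1, δ ≤ dist (φ t y) y := by
    intro y
    obtain ⟨x, hx, hy⟩ := Set.mem_iUnion₂.1 (hs (Set.mem_univ y))
    exact ⟨tt x, htt x, le_trans (Finset.inf'_le _ hx) (le_of_lt hy)⟩
  -- the compact set of (t, y) with t ∈ [0,1] and displacement ≥ δ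
  set C : Set (ℝ × M) := {p | p.1 ∈ Set.Icc (0:ℝ) 1 ∧ δ ≤ dist (φ p.1 p.2) p.2} with hC
  have hCdist : Continuous fun p : ℝ × M => dist (φ p.1 p.2) p.2 :=
    hcont.dist continuous_snd
  have hCclosed : IsClosed C := by
    apply IsClosed.inter
    · exact isClosed_Icc.preimage continuous_fst
    · exact isClosed_le continuous_const hCdist
  have hCcompact : IsCompact C := by
    have : C ⊆ (Set.Icc (0:ℝ) 1) ×ˢ (Set.univ : Set M) := by
      intro p hp; exact ⟨hp.1, Set.mem_univ _⟩
    exact (isCompact_Icc.prod isCompact_univ).of_isClosed_subset hCclosed this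
  have hCne : C.Nonempty := by
    obtain ⟨y⟩ := ‹Nonempty M›
    obtain ⟨t, ht, hdt⟩ := hδmove y
    exact ⟨(t, y), ht, hdt⟩
  obtain ⟨p0, hp0C, hp0min⟩ := hCcompact.exists_isMinOn hCne (continuous_fst.continuousOn)
  set τ := p0.1 with hτ
  have hτpos : 0 < τ := by
    rcases lt_or_eq_of_le hp0C.1.1 with h | h
    · exact h
    · exfalso
      have := hp0C.2
      rw [← h, h0] at this
      simp at this
      linarith
  refine ⟨τ, hτpos, ?_⟩
  intro x T hT hTτ hfix
  -- period extends to multiples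
  have hmul : ∀ n : ℕ, φ (n * T) x = x := by
    intro n
    induction n with
    | zero => simpa using h0 x
    | succ n ih =>
      have : ((n:ℝ) + 1) * T = T + n * T := by ring
      push_cast
      rw [this, hadd, ih, hfix]
  obtain ⟨t, ht, hdt⟩ := hδmove x
  -- reduce t mod T
  set n : ℕ := ⌊t / T⌋₊ with hn
  set r : ℝ := t - n * T with hr
  have hr0 : 0 ≤ r := by
    have : (n:ℝ) ≤ t / T := Nat.floor_le (div_nonneg ht.1 hT.le)
    rw [hr]
    have := (le_div_iff₀ hT).1 this
    linarith
  have hrT : r < T := by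
    have : t / T < n + 1 := Nat.lt_floor_add_one _
    have := (div_lt_iff₀ hT).1 this
    rw [hr]; linarith
  have hφr : φ r x = φ t x := by
    have heq : r + n * T = t := by rw [hr]; ring
    calc φ r x = φ r (φ (n * T) x) := by rw [hmul n]
      _ = φ (r + n * T) x := (hadd _ _ _).symm
      _ = φ t x := by rw [heq]
  have hrC : (r, x) ∈ C := by
    refine ⟨⟨hr0, ?_⟩, ?_⟩
    · have : τ ≤ 1 := hp0C.1.2
      linarith
    · simpa [hφr] using hdt
  have : τ ≤ r := hp0min hrC
  linarith
end

section
/- Let M be a compact metric space, let φ be a flow on M, and suppose there are sequences x_n ∈ M and T_n > 0 with x_n → x, T_n → 0, and φ(T_n, x_n) = x_n for all n. Then x is a rest point of φ, i.e. φ(t, x) = x for all t ∈ ℝ. (Key compactness step in the proof of Lemma 5.9.) -/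
/-- Key compactness step in the proof of Lemma 5.9: if points `xs n` converging to `x`
are periodic with periods `Ts n > 0` tending to `0`, then `x` is a rest point. -/
theorem rest_point_of_periodic_points_with_periods_tendsto_zero
    {M : Type*} [MetricSpace M] [CompactSpace M]
    (φ : ℝ → M → M)
    (hcont : Continuous fun p : ℝ × M => φ p.1 p.2)
    (h0 : ∀ x : M, φ 0 x = x)
    (hadd : ∀ (s t : ℝ) (x : M), φ (s + t) x = φ s (φ t x))
    (x : M) (xs : ℕ → M) (Ts : ℕ → ℝ)
    (hTpos : ∀ n, 0 < Ts n)
    (hxs : Filter.Tendsto xs Filter.atTop (nhds x))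
    (hTs : Filter.Tendsto Ts Filter.atTop (nhds 0))
    (hper : ∀ n, φ (Ts n) (xs n) = xs n) :
    ∀ t : ℝ, φ t x = x := by
  intro t
  -- negative period
  have hneg : ∀ n, φ (-(Ts n)) (xs n) = xs n := by
    intro n
    have := hadd (-(Ts n)) (Ts n) (xs n)
    rw [hper n] at this
    simpa [h0] using this.symm
  -- integer multiples
  have hint : ∀ (n : ℕ) (k : ℤ), φ ((k : ℝ) * Ts n) (xs n) = xs n := by
    intro n k
    induction k using Int.induction_on with
    | zero => simpa using h0 (xs n)
    | succ k ih =>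
        have h1 : ((k : ℝ) + 1) * Ts n = Ts n + (k : ℝ) * Ts n := by ring
        push_cast at ih ⊢
        rw [h1, hadd, ih, hper]
    | pred k ih =>
        have h1 : (-(k : ℝ) - 1) * Ts n = -(Ts n) + (-(k : ℝ)) * Ts n := by ring
        push_cast at ih ⊢
        rw [h1, hadd, ih, hneg]
  set r : ℕ → ℝ := fun n => Ts n * Int.fract (t / Ts n) with hr
  have hr0 : ∀ n, 0 ≤ r n := fun n =>
    mul_nonneg (hTpos n).le (Int.fract_nonneg _)
  have hr1 : ∀ n, r n ≤ Ts n := fun n => by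
    have := (Int.fract_lt_one (t / Ts n)).le
    calc r n ≤ Ts n * 1 := mul_le_mul_of_nonneg_left this (hTpos n).le
    _ = Ts n := mul_one _
  have hrt : Filter.Tendsto r Filter.atTop (nhds 0) := by
    apply squeeze_zero hr0 hr1 hTs
  -- key identity
  have hkey : ∀ n, φ t (xs n) = φ (r n) (xs n) := by
    intro n
    have hT := (hTpos n).ne'
    have ht : t = r n + (⌊t / Ts n⌋ : ℝ) * Ts n := by
      simp only [hr, Int.fract]
      field_simp
      ring
    conv_lhs => rw [ht]
    rw [hadd, hint]
  have L1 : Filter.Tendsto (fun n => φ t (xs n)) Filter.atTop (nhds (φ t x)) :=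
    (hcont.tendsto (t, x)).comp (tendsto_const_nhds.prodMk_nhds hxs)
  have L2 : Filter.Tendsto (fun n => φ (r n) (xs n)) Filter.atTop (nhds (φ 0 x)) :=
    (hcont.tendsto (0, x)).comp (hrt.prodMk_nhds hxs)
  have := tendsto_nhds_unique (L1.congr fun n => hkey n) L2
  rw [this, h0]
end

section
/- Let M be a nonempty compact metric space and let Φ : [0,1] × ℝ × M → M be a continuous family of flows parametrized by [0,1] such that for every s ∈ [0,1] the flow Φ_s is without rest points. Then there exists τ > 0 such that Φ(s, T, x) ≠ x for every s ∈ [0,1], every x ∈ M, and every real T with 0 < T < τ; i.e. the infimum over s ∈ [0,1] of the smallest period of a periodic point of Φ_s is positive. (Lemma 5.9: the smallest period of closed orbits appearing in a homotopy of fixed-point-free flows is uniformly bounded away from 0.) -/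
/-- Lemma 5.9: for a continuous family of flows on a nonempty compact metric space,
parametrized by `[0,1]`, each without rest points, the smallest period of closed orbits
appearing in the family is uniformly bounded away from `0`. -/
theorem family_of_flows_period_bounded_below
    {M : Type*} [MetricSpace M] [CompactSpace M] [Nonempty M]
    (Φ : Set.Icc (0 : ℝ) 1 → ℝ → M → M)
    (hcont : Continuous fun p : Set.Icc (0 : ℝ) 1 × ℝ × M => Φ p.1 p.2.1 p.2.2)
    (h0 : ∀ (s : Set.Icc (0 : ℝ) 1) (x : M), Φ s 0 x = x)
    (hadd : ∀ (s : Set.Icc (0 : ℝ) 1) (t t' : ℝ) (x : M),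
      Φ s (t + t') x = Φ s t (Φ s t' x))
    (hnorest : ∀ (s : Set.Icc (0 : ℝ) 1) (x : M), ∃ t : ℝ, Φ s t x ≠ x) :
    ∃ τ : ℝ, 0 < τ ∧ ∀ (s : Set.Icc (0 : ℝ) 1) (x : M) (T : ℝ),
      0 < T → T < τ → Φ s T x ≠ x := by
  classical
  -- Step 1: every point has a time in [0,1] witnessing non-rest.
  have key : ∀ (s : Set.Icc (0 : ℝ) 1) (x : M), ∃ t : Set.Icc (0 : ℝ) 1,
      Φ s (t : ℝ) x ≠ x := by
    intro s x
    by_contra hall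
    push_neg at hall
    have hIcc : ∀ t : ℝ, 0 ≤ t → t ≤ 1 → Φ s t x = x := by
      intro t ht0 ht1
      exact hall ⟨t, ht0, ht1⟩
    have hnat : ∀ n : ℕ, ∀ t : ℝ, 0 ≤ t → t ≤ n → Φ s t x = x := by
      intro n
      induction n with
      | zero =>
        intro t ht0 ht1
        have : t = 0 := le_antisymm (by exact_mod_cast ht1) ht0
        rw [this]; exact h0 s x
      | succ n ih =>
        intro t ht0 ht1
        by_cases h : t ≤ 1
        · exact hIcc t ht0 h
        · push_neg at h
          have h2 : Φ s t x = Φ s (t - 1) (Φ s 1 x) := by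
            have := hadd s (t - 1) 1 x
            simpa using this
          have h3 : Φ s 1 x = x := hIcc 1 (by norm_num) le_rfl
          have h4 : Φ s (t - 1) x = x := by
            apply ih
            · linarith
            · push_cast at ht1 ⊢; linarith
          rw [h2, h3, h4]
    have hpos : ∀ t : ℝ, 0 ≤ t → Φ s t x = x := by
      intro t ht0
      exact hnat ⌈t⌉₊ t ht0 (Nat.le_ceil t)
    have hallR : ∀ t : ℝ, Φ s t x = x := by
      intro t
      rcases le_or_gt 0 t with ht | ht
      · exact hpos t ht
      · have hneg : Φ s (-t) x = x := hpos (-t) (by linarith)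
        have h5 := hadd s t (-t) x
        rw [hneg] at h5
        have h6 : Φ s (t + -t) x = x := by
          rw [show t + -t = 0 by ring]; exact h0 s x
        rw [h5] at h6
        exact h6
    obtain ⟨t, ht⟩ := hnorest s x
    exact ht (hallR t)
  -- Step 2: uniform ε via an open cover of the compact space.
  set U : ℕ → Set (Set.Icc (0 : ℝ) 1 × M) :=
    fun n => {p | ∃ t : Set.Icc (0 : ℝ) 1,
      (1 : ℝ) / (n + 1) < dist (Φ p.1 (t : ℝ) p.2) p.2} with hU
  have hUopen : ∀ n, IsOpen (U n) := by
    intro n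
    have hiU : U n = ⋃ t : Set.Icc (0 : ℝ) 1,
        {p : Set.Icc (0 : ℝ) 1 × M |
          (1 : ℝ) / (n + 1) < dist (Φ p.1 (t : ℝ) p.2) p.2} := by
      ext p; simp [hU, Set.mem_iUnion]
    rw [hiU]
    apply isOpen_iUnion
    intro t
    have hc : Continuous fun p : Set.Icc (0 : ℝ) 1 × M =>
        dist (Φ p.1 (t : ℝ) p.2) p.2 := by
      apply Continuous.dist _ continuous_snd
      exact hcont.comp (continuous_fst.prodMk
        (continuous_const.prodMk continuous_snd))
    exact isOpen_lt continuous_const hc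
  have hUcover : (Set.univ : Set (Set.Icc (0 : ℝ) 1 × M)) ⊆ ⋃ n : ℕ, U n := by
    intro p _
    obtain ⟨t, ht⟩ := key p.1 p.2
    have hd : 0 < dist (Φ p.1 (t : ℝ) p.2) p.2 := dist_pos.2 ht
    obtain ⟨n, hn⟩ := exists_nat_one_div_lt hd
    exact Set.mem_iUnion.2 ⟨n, ⟨t, hn⟩⟩
  obtain ⟨F, hF⟩ := isCompact_univ.elim_finite_subcover U hUopen hUcover
  set N : ℕ := F.sup id with hN
  set ε : ℝ := (1 : ℝ) / (N + 1) with hε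
  have hεpos : 0 < ε := by positivity
  have hcoverN : ∀ p : Set.Icc (0 : ℝ) 1 × M, ∃ t : Set.Icc (0 : ℝ) 1,
      ε < dist (Φ p.1 (t : ℝ) p.2) p.2 := by
    intro p
    have hp := hF (Set.mem_univ p)
    rw [Set.mem_iUnion₂] at hp
    obtain ⟨n, hnF, t, ht⟩ := hp
    refine ⟨t, lt_of_le_of_lt ?_ ht⟩
    have hle : n ≤ N := Finset.le_sup (f := id) hnF
    have hle' : (n : ℝ) ≤ N := by exact_mod_cast hle
    apply one_div_le_one_div_of_le
    · positivity
    · linarith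
  -- Step 3: uniform continuity on the compact space.
  have hHcont : Continuous fun q : Set.Icc (0 : ℝ) 1 × Set.Icc (0 : ℝ) 1 × M =>
      Φ q.1 (q.2.1 : ℝ) q.2.2 := by
    exact hcont.comp (continuous_fst.prodMk
      (((continuous_subtype_val.comp continuous_fst).comp continuous_snd).prodMk
        (continuous_snd.comp continuous_snd)))
  have hHuc : UniformContinuous fun q : Set.Icc (0 : ℝ) 1 × Set.Icc (0 : ℝ) 1 × M =>
      Φ q.1 (q.2.1 : ℝ) q.2.2 :=
    CompactSpace.uniformContinuous_of_continuous hHcont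
  obtain ⟨δ, hδpos, hδ⟩ := Metric.uniformContinuous_iff.1 hHuc (ε / 2) (by positivity)
  -- small times move points by less than ε/2
  have hsmall : ∀ (s : Set.Icc (0 : ℝ) 1) (x : M) (r : ℝ), 0 ≤ r → r ≤ 1 → r < δ →
      dist (Φ s r x) x < ε / 2 := by
    intro s x r hr0 hr1 hrδ
    have hq : dist ((s, (⟨r, hr0, hr1⟩ : Set.Icc (0 : ℝ) 1), x) :
          Set.Icc (0 : ℝ) 1 × Set.Icc (0 : ℝ) 1 × M)
        ((s, (⟨0, le_rfl, zero_le_one⟩ : Set.Icc (0 : ℝ) 1), x) :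
          Set.Icc (0 : ℝ) 1 × Set.Icc (0 : ℝ) 1 × M) < δ := by
      rw [Prod.dist_eq, Prod.dist_eq]
      simp only [dist_self, Subtype.dist_eq, Real.dist_eq, sub_zero,
        abs_of_nonneg hr0]
      rw [max_eq_left hr0, max_eq_right hr0]
      exact hrδ
    have h7 := hδ hq
    simpa [h0 s x] using h7
  refine ⟨min δ 1, lt_min hδpos one_pos, ?_⟩
  intro s x T hT0 hTτ hfix
  have hTδ : T < δ := lt_of_lt_of_le hTτ (min_le_left _ _)
  have hT1 : T < 1 := lt_of_lt_of_le hTτ (min_le_right _ _)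
  have hmul : ∀ n : ℕ, Φ s (n * T) x = x := by
    intro n
    induction n with
    | zero => simpa using h0 s x
    | succ n ih =>
      have hcast : ((n : ℕ) + 1 : ℕ) * T = (n : ℝ) * T + T := by push_cast; ring
      rw [hcast, hadd, hfix, ih]
  have hallsmall : ∀ t : ℝ, 0 ≤ t → t ≤ 1 → dist (Φ s t x) x < ε / 2 := by
    intro t ht0 ht1
    set n : ℕ := ⌊t / T⌋₊ with hn
    have hnle : (n : ℝ) * T ≤ t := by
      have h1 : (n : ℝ) ≤ t / T := Nat.floor_le (by positivity)
      calc (n : ℝ) * T ≤ (t / T) * T := by nlinarith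
      _ = t := by field_simp
    have hnlt : t < ((n : ℝ) + 1) * T := by
      have h1 : t / T < (n : ℝ) + 1 := Nat.lt_floor_add_one _
      calc t = (t / T) * T := by field_simp
      _ < ((n : ℝ) + 1) * T := by nlinarith
    have hr0 : 0 ≤ t - n * T := by linarith
    have hrT : t - n * T < T := by linarith
    have heq : Φ s t x = Φ s (t - n * T) x := by
      conv_lhs => rw [show t = (t - n * T) + n * T by ring]
      rw [hadd, hmul n]
    rw [heq]
    exact hsmall s x (t - n * T) hr0 (by linarith) (by linarith)
  obtain ⟨t, ht⟩ := hcoverN (s, x)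
  have h1 : dist (Φ s (t : ℝ) x) x < ε / 2 := hallsmall t t.2.1 t.2.2
  simp only at ht
  linarith
end
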